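/- arXiv:2105.06574 — 4 statements merged into one kernel-verified Lean document; each statement's English description precedes it below -/
import Mathlib

section
/- The quintuple of polynomials (A, B, C, D, E) with A = 576u⁵−1296u⁴+288u³+1152u²−864u+144, B = 16u⁸−192u⁷+704u⁶−736u⁵−72u⁴−80u³+624u²−264u+81, C = 16u⁸−256u⁶+512u⁵−312u⁴+160u³+96u²−144u+9, D = 64u⁸−384u⁷+896u⁶−1024u⁵+528u⁴−128u³+288u²+48u+36, E = 144u⁸−576u⁷+576u⁶−288u⁵+504u⁴+144u³+144u²+72u+9, and q(u) = (4u⁴−20u³+13u²+12u)·(12(2u²+1)(2u²−4u−1)(u−1))², has the property that the product of any two distinct members plus q(u) is the square of a polynomial in ℚ[u]. -/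
open Polynomial

set_option maxHeartbeats 2000000 in
theorem stmt8 (A B C D E q : Polynomial ℚ)
    (hA : A = 576 * X ^ 5 - 1296 * X ^ 4 + 288 * X ^ 3 + 1152 * X ^ 2 - 864 * X + 144)
    (hB : B = 16 * X ^ 8 - 192 * X ^ 7 + 704 * X ^ 6 - 736 * X ^ 5 - 72 * X ^ 4 - 80 * X ^ 3 +
      624 * X ^ 2 - 264 * X + 81)
    (hC : C = 16 * X ^ 8 - 256 * X ^ 6 + 512 * X ^ 5 - 312 * X ^ 4 + 160 * X ^ 3 +
      96 * X ^ 2 - 144 * X + 9)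
    (hD : D = 64 * X ^ 8 - 384 * X ^ 7 + 896 * X ^ 6 - 1024 * X ^ 5 + 528 * X ^ 4 -
      128 * X ^ 3 + 288 * X ^ 2 + 48 * X + 36)
    (hE : E = 144 * X ^ 8 - 576 * X ^ 7 + 576 * X ^ 6 - 288 * X ^ 5 + 504 * X ^ 4 +
      144 * X ^ 3 + 144 * X ^ 2 + 72 * X + 9)
    (hq : q = (4 * X ^ 4 - 20 * X ^ 3 + 13 * X ^ 2 + 12 * X) *
      (12 * (2 * X ^ 2 + 1) * (2 * X ^ 2 - 4 * X - 1) * (X - 1)) ^ 2) :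
    (∃ h : Polynomial ℚ, A * B + q = h ^ 2) ∧
    (∃ h : Polynomial ℚ, A * C + q = h ^ 2) ∧
    (∃ h : Polynomial ℚ, A * D + q = h ^ 2) ∧
    (∃ h : Polynomial ℚ, A * E + q = h ^ 2) ∧
    (∃ h : Polynomial ℚ, B * C + q = h ^ 2) ∧
    (∃ h : Polynomial ℚ, B * D + q = h ^ 2) ∧
    (∃ h : Polynomial ℚ, B * E + q = h ^ 2) ∧
    (∃ h : Polynomial ℚ, C * D + q = h ^ 2) ∧
    (∃ h : Polynomial ℚ, C * E + q = h ^ 2) ∧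
    (∃ h : Polynomial ℚ, D * E + q = h ^ 2) := by
  subst hA hB hC hD hE hq
  exact ⟨⟨96 * X ^ 7 + (-480) * X ^ 6 + 336 * X ^ 5 + 528 * X ^ 4 + (-24) * X ^ 3 + (-840) * X ^ 2 + 492 * X + (-108), by ring⟩,
    ⟨96 * X ^ 7 + (-480) * X ^ 6 + 912 * X ^ 5 + (-768) * X ^ 4 + 264 * X ^ 3 + 312 * X ^ 2 + (-372) * X + 36, by ring⟩,
    ⟨96 * X ^ 7 + (-336) * X ^ 6 + 48 * X ^ 5 + 960 * X ^ 4 + (-888) * X ^ 3 + 204 * X ^ 2 + (-156) * X + 72, by ring⟩,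
    ⟨96 * X ^ 7 + (-96) * X ^ 6 + (-528) * X ^ 5 + 720 * X ^ 4 + (-408) * X ^ 3 + 312 * X ^ 2 + (-60) * X + (-36), by ring⟩,
    ⟨16 * X ^ 8 + (-96) * X ^ 7 + 224 * X ^ 6 + (-400) * X ^ 5 + 456 * X ^ 4 + (-104) * X ^ 3 + (-216) * X ^ 2 + 228 * X + (-27), by ring⟩,
    ⟨32 * X ^ 8 + (-288) * X ^ 7 + 928 * X ^ 6 + (-1136) * X ^ 5 + 384 * X ^ 4 + (-184) * X ^ 3 + 408 * X ^ 2 + (-36) * X + 54, by ring⟩,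
    ⟨48 * X ^ 8 + (-384) * X ^ 7 + 864 * X ^ 6 + (-672) * X ^ 5 + 480 * X ^ 4 + (-432) * X ^ 3 + (-24) * X ^ 2 + (-96) * X + (-27), by ring⟩,
    ⟨32 * X ^ 8 + (-96) * X ^ 7 + (-32) * X ^ 6 + 112 * X ^ 5 + 144 * X ^ 4 + 56 * X ^ 3 + (-120) * X ^ 2 + 84 * X + (-18), by ring⟩,
    ⟨48 * X ^ 8 + (-96) * X ^ 7 + (-288) * X ^ 6 + 624 * X ^ 5 + (-168) * X ^ 4 + 216 * X ^ 3 + (-24) * X ^ 2 + (-60) * X + (-9), by ring⟩,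
    ⟨96 * X ^ 8 + (-480) * X ^ 7 + 864 * X ^ 6 + (-912) * X ^ 5 + 672 * X ^ 4 + (-72) * X ^ 3 + 168 * X ^ 2 + 132 * X + 18, by ring⟩⟩
end

section
/- For the quintuple A = 25u²+30u+20, B = 4u²+24u+20, C = 9u²−2u−4, D = u²+14u+12, E = 16u²−4, and q(u) = 4(−40u³−19u²+38u+21), the product of any two distinct members plus q(u) is the square of a polynomial in ℚ[u]. -/
open Polynomial

theorem stmt9 (A B C D E q : Polynomial ℚ)
    (hA : A = 25 * X ^ 2 + 30 * X + 20)
    (hB : B = 4 * X ^ 2 + 24 * X + 20)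
    (hC : C = 9 * X ^ 2 - 2 * X - 4)
    (hD : D = X ^ 2 + 14 * X + 12)
    (hE : E = 16 * X ^ 2 - 4)
    (hq : q = 4 * (-40 * X ^ 3 - 19 * X ^ 2 + 38 * X + 21)) :
    (∃ h : Polynomial ℚ, A * B + q = h ^ 2) ∧
    (∃ h : Polynomial ℚ, A * C + q = h ^ 2) ∧
    (∃ h : Polynomial ℚ, A * D + q = h ^ 2) ∧
    (∃ h : Polynomial ℚ, A * E + q = h ^ 2) ∧
    (∃ h : Polynomial ℚ, B * C + q = h ^ 2) ∧
    (∃ h : Polynomial ℚ, B * D + q = h ^ 2) ∧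
    (∃ h : Polynomial ℚ, B * E + q = h ^ 2) ∧
    (∃ h : Polynomial ℚ, C * D + q = h ^ 2) ∧
    (∃ h : Polynomial ℚ, C * E + q = h ^ 2) ∧
    (∃ h : Polynomial ℚ, D * E + q = h ^ 2) := by
  subst hA hB hC hD hE hq
  refine ⟨⟨10 * X ^ 2 + 28 * X + 22, by ring⟩,
    ⟨15 * X ^ 2 + 2 * X - 2, by ring⟩,
    ⟨5 * X ^ 2 + 22 * X + 18, by ring⟩,
    ⟨20 * X ^ 2 + 8 * X + 2, by ring⟩,
    ⟨6 * X ^ 2 + 4 * X + 2, by ring⟩,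
    ⟨2 * X ^ 2 - 20 * X - 18, by ring⟩,
    ⟨8 * X ^ 2 + 14 * X + 2, by ring⟩,
    ⟨3 * X ^ 2 - 6 * X - 6, by ring⟩,
    ⟨12 * X ^ 2 - 8 * X - 10, by ring⟩,
    ⟨4 * X ^ 2 + 8 * X + 6, by ring⟩⟩
end

section
/- For the quintuple A = 900u⁴+4320u³−1161u²−3438u+1404, B = 1600u⁴−1600u³+1100u²−920u+396, C = 100u⁴+1760u³−1201u²−542u+324, D = 2500u⁴−4000u³+959u²+514u+36, E = 3600u⁴−2880u³−1584u²+864u+324, and q(u) = (−1200u³+1645u²−410u−35)·(6(10u²−4u−3))², the product of any two distinct members plus q(u) is the square of a polynomial in ℚ[u]. -/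
open Polynomial

theorem stmt10 (A B C D E q : Polynomial ℚ)
    (hA : A = 900 * X ^ 4 + 4320 * X ^ 3 - 1161 * X ^ 2 - 3438 * X + 1404)
    (hB : B = 1600 * X ^ 4 - 1600 * X ^ 3 + 1100 * X ^ 2 - 920 * X + 396)
    (hC : C = 100 * X ^ 4 + 1760 * X ^ 3 - 1201 * X ^ 2 - 542 * X + 324)
    (hD : D = 2500 * X ^ 4 - 4000 * X ^ 3 + 959 * X ^ 2 + 514 * X + 36)
    (hE : E = 3600 * X ^ 4 - 2880 * X ^ 3 - 1584 * X ^ 2 + 864 * X + 324)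
    (hq : q = (-1200 * X ^ 3 + 1645 * X ^ 2 - 410 * X - 35) *
      (6 * (10 * X ^ 2 - 4 * X - 3)) ^ 2) :
    (∃ h : Polynomial ℚ, A * B + q = h ^ 2) ∧
    (∃ h : Polynomial ℚ, A * C + q = h ^ 2) ∧
    (∃ h : Polynomial ℚ, A * D + q = h ^ 2) ∧
    (∃ h : Polynomial ℚ, A * E + q = h ^ 2) ∧
    (∃ h : Polynomial ℚ, B * C + q = h ^ 2) ∧
    (∃ h : Polynomial ℚ, B * D + q = h ^ 2) ∧
    (∃ h : Polynomial ℚ, B * E + q = h ^ 2) ∧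
    (∃ h : Polynomial ℚ, C * D + q = h ^ 2) ∧
    (∃ h : Polynomial ℚ, C * E + q = h ^ 2) ∧
    (∃ h : Polynomial ℚ, D * E + q = h ^ 2) := by
  subst hA hB hC hD hE hq
  refine ⟨⟨1200 * X ^ 4 + 480 * X ^ 3 + 570 * X ^ 2 - 1908 * X + 738, by ring⟩,
    ⟨300 * X ^ 4 - 3840 * X ^ 3 + 1731 * X ^ 2 + 1530 * X - 666, by ring⟩,
    ⟨1500 * X ^ 4 + 960 * X ^ 3 - 3621 * X ^ 2 + 1098 * X + 198, by ring⟩,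
    ⟨1800 * X ^ 4 + 2400 * X ^ 3 - 4008 * X ^ 2 - 48 * X + 666, by ring⟩,
    ⟨400 * X ^ 4 - 2080 * X ^ 3 + 530 * X ^ 2 + 988 * X - 342, by ring⟩,
    ⟨2000 * X ^ 4 - 3680 * X ^ 3 + 1630 * X ^ 2 + 68 * X + 54, by ring⟩,
    ⟨2400 * X ^ 4 - 3060 * X ^ 3 + 1260 * X ^ 2 + 174 * X - 342, by ring⟩,
    ⟨500 * X ^ 4 - 320 * X ^ 3 - 671 * X ^ 2 + 446 * X - 18, by ring⟩,
    ⟨600 * X ^ 4 + 1440 * X ^ 3 - 1872 * X ^ 2 - 96 * X + 306, by ring⟩,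
    ⟨3000 * X ^ 4 - 4320 * X ^ 3 + 288 * X ^ 2 + 960 * X + 18, by ring⟩⟩
end

section
/- For the quintuple A = 324u⁴+423u²−198u+180, B = 64u⁴+320u³−52u²−248u+60, C = 100u⁴−256u³+239u²+106u+36, D = 4u⁴+128u³−49u²−86u+12, E = 144u⁴−576u³+432u²+288u+36, and q(u) = (−144u³+61u²+94u−11)·(6(2u²−4u−1))², the product of any two distinct members plus q(u) is the square of a polynomial in ℚ[u]. -/
open Polynomial

theorem stmt11 (A B C D E q : Polynomial ℚ)
    (hA : A = 324 * X ^ 4 + 423 * X ^ 2 - 198 * X + 180)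
    (hB : B = 64 * X ^ 4 + 320 * X ^ 3 - 52 * X ^ 2 - 248 * X + 60)
    (hC : C = 100 * X ^ 4 - 256 * X ^ 3 + 239 * X ^ 2 + 106 * X + 36)
    (hD : D = 4 * X ^ 4 + 128 * X ^ 3 - 49 * X ^ 2 - 86 * X + 12)
    (hE : E = 144 * X ^ 4 - 576 * X ^ 3 + 432 * X ^ 2 + 288 * X + 36)
    (hq : q = (-144 * X ^ 3 + 61 * X ^ 2 + 94 * X - 11) *
      (6 * (2 * X ^ 2 - 4 * X - 1)) ^ 2) :
    (∃ h : Polynomial ℚ, A * B + q = h ^ 2) ∧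
    (∃ h : Polynomial ℚ, A * C + q = h ^ 2) ∧
    (∃ h : Polynomial ℚ, A * D + q = h ^ 2) ∧
    (∃ h : Polynomial ℚ, A * E + q = h ^ 2) ∧
    (∃ h : Polynomial ℚ, B * C + q = h ^ 2) ∧
    (∃ h : Polynomial ℚ, B * D + q = h ^ 2) ∧
    (∃ h : Polynomial ℚ, B * E + q = h ^ 2) ∧
    (∃ h : Polynomial ℚ, C * D + q = h ^ 2) ∧
    (∃ h : Polynomial ℚ, C * E + q = h ^ 2) ∧
    (∃ h : Polynomial ℚ, D * E + q = h ^ 2) := by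
  subst hA hB hC hD hE hq
  refine ⟨⟨144*X^4+288*X^3+66*X^2-276*X+102, by ring⟩,
    ⟨180*X^4-288*X^3+357*X^2+78*X+78, by ring⟩,
    ⟨36*X^4+288*X^3-75*X^2-210*X+42, by ring⟩,
    ⟨216*X^4-480*X^3+144*X^2-288*X-78, by ring⟩,
    ⟨80*X^4-32*X^3+118*X^2-28*X+42, by ring⟩,
    ⟨16*X^4-352*X^3+170*X^2+220*X-18, by ring⟩,
    ⟨96*X^4-60*X^3-396*X^2+102*X+42, by ring⟩,
    ⟨20*X^4-224*X^3+121*X^2+134*X-6, by ring⟩,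
    ⟨120*X^4-480*X^3+360*X^2+240*X+30, by ring⟩,
    ⟨24*X^4-96*X^3+72*X^2+48*X+6, by ring⟩⟩
end
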